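/- As an identity of formal power series in q with integer coefficients, the product ∏_{n≥1} (1 - q^{5n})(1 - q^{5n-2})(1 - q^{5n-3}) equals the sum ∑_{k∈ℤ} (-1)^k q^{k(5k+1)/2}. -/

import Mathlib

open PowerSeries

noncomputable instance : TopologicalSpace (PowerSeries ℤ) :=
  inferInstanceAs (TopologicalSpace ((Unit →₀ ℕ) → ℤ))

instance : T2Space ℤ⟦X⟧ := inferInstanceAs (T2Space ((Unit →₀ ℕ) → ℤ))

/-!
Cauchy's proof of the triple product identity. Expanding `∏_{i<2m} (q^{5m} - q^3 (q^5)^i)` by the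
`q`-binomial theorem and pulling `-q^{5i+3}` out of its first `m` factors gives the finite identity
`∏_{n<m} (1 - q^{5n+3}) (1 - q^{5n+2}) = ∑_{|k| ≤ m} (-1)^k [2m, m+k]_{q^5} q^{k(5k+1)/2}`.
After multiplying by `(q^5; q^5)_m`, each coefficient
`(q^5; q^5)_m [2m, m+k]_{q^5} = (q^5; q^5)_m (q^5; q^5)_{2m} / ((q^5; q^5)_{m+k} (q^5; q^5)_{m-k})`
is `1` modulo `q^{5(m-|k|)+5}`, because `(Q; Q)_r ≡ (Q; Q)_s` modulo `Q^{r+1}` for `r ≤ s`.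
As `k(5k+1)/2 ≥ |k|`, the `m`-th partial product and the partial sum over `|k| ≤ m` therefore
agree modulo `q^{m+1}`, so both sides converge coefficientwise to the same power series.
-/

open Finset Filter Topology

section CommRing

variable {R : Type*} [CommRing R]

theorem dvd_prod_sub_one {ι : Type*} {d : R} {s : Finset ι} {f : ι → R}
    (h : ∀ i ∈ s, d ∣ f i - 1) : d ∣ ∏ i ∈ s, f i - 1 := by
  simp only [← Ideal.mem_span_singleton, ← Ideal.Quotient.eq, map_prod, map_one] at h ⊢
  exact prod_eq_one h

theorem dvd_prod_sub_prod_of_subset {ι : Type*} [DecidableEq ι] {d : R} {s t : Finset ι}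
    {f : ι → R} (hst : s ⊆ t) (h : ∀ i ∈ t \ s, d ∣ f i - 1) :
    d ∣ ∏ i ∈ t, f i - ∏ i ∈ s, f i := by
  rw [← prod_sdiff hst, ← sub_one_mul]
  exact dvd_mul_of_dvd_left (dvd_prod_sub_one h) _

def gaussBinom (Q : R) : ℕ → ℕ → R
  | _, 0 => 1
  | 0, _ + 1 => 0
  | n + 1, j + 1 => gaussBinom Q n j + Q ^ (j + 1) * gaussBinom Q n (j + 1)

namespace gaussBinom

variable (Q : R)

@[simp] theorem zero_right (n : ℕ) : gaussBinom Q n 0 = 1 := by cases n <;> rfl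

theorem succ_succ (n j : ℕ) :
    gaussBinom Q (n + 1) (j + 1) = gaussBinom Q n j + Q ^ (j + 1) * gaussBinom Q n (j + 1) := rfl

theorem eq_zero_of_lt : ∀ {n j : ℕ}, n < j → gaussBinom Q n j = 0
  | 0, _ + 1, _ => rfl
  | n + 1, j + 1, h => by
    rw [succ_succ, eq_zero_of_lt (by omega), eq_zero_of_lt (by omega), mul_zero, add_zero]

@[simp] theorem self : ∀ n : ℕ, gaussBinom Q n n = 1
  | 0 => rfl
  | n + 1 => by rw [succ_succ, self n, eq_zero_of_lt Q n.lt_succ_self, mul_zero, add_zero]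

end gaussBinom

theorem Nat.choose_two_add_one (j : ℕ) : (j + 1).choose 2 = j.choose 2 + j := by
  rw [Nat.choose_succ_succ, Nat.choose_one_right, add_comm]

/-- Cauchy's `q`-binomial theorem. -/
theorem prod_sub_mul_pow_eq_sum (Q y : R) :
    ∀ (n : ℕ) (x : R), ∏ i ∈ range n, (y - x * Q ^ i) =
      ∑ j ∈ range (n + 1), (-1) ^ j * gaussBinom Q n j * Q ^ j.choose 2 * x ^ j * y ^ (n - j)
  | 0, x => by simp
  | n + 1, x => by
    set t := fun j ↦ (-1) ^ j * gaussBinom Q n j * Q ^ j.choose 2 * (x * Q) ^ j * y ^ (n - j)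
    have ih : ∏ i ∈ range n, (y - x * Q ^ (i + 1)) = ∑ j ∈ range (n + 1), t j := by
      simp only [pow_succ', ← mul_assoc]
      exact prod_sub_mul_pow_eq_sum Q y n (x * Q)
    have hx : ∑ j ∈ range (n + 1), (-1) ^ (j + 1) * gaussBinom Q n j * Q ^ (j + 1).choose 2 *
        x ^ (j + 1) * y ^ (n - j) = -x * ∑ j ∈ range (n + 1), t j := by
      rw [mul_sum]
      refine sum_congr rfl fun j _ ↦ ?_
      rw [Nat.choose_two_add_one]
      ring
    have hy : ∑ j ∈ range (n + 1), (-1) ^ (j + 1) * (Q ^ (j + 1) * gaussBinom Q n (j + 1)) *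
        Q ^ (j + 1).choose 2 * x ^ (j + 1) * y ^ (n - j) = y * ∑ j ∈ range n, t (j + 1) := by
      rw [sum_range_succ, gaussBinom.eq_zero_of_lt Q n.lt_succ_self, mul_sum]
      refine (add_eq_left.mpr (by ring)).trans (sum_congr rfl fun j hj ↦ ?_)
      rw [show n - j = n - (j + 1) + 1 by grind]
      ring
    rw [prod_range_succ', ih, sum_range_succ' _ (n + 1)]
    simp only [gaussBinom.succ_succ, Nat.add_sub_add_right, mul_add, add_mul, sum_add_distrib,
      hx, hy]
    rw [sum_range_succ' t]
    simp only [t, gaussBinom.zero_right, Nat.choose_zero_succ, pow_zero, tsub_zero, one_mul,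
      mul_one]
    ring

def qFactorial (Q : R) (m : ℕ) : R := ∏ i ∈ range m, (1 - Q ^ (i + 1))

namespace qFactorial

variable (Q : R)

@[simp] theorem zero : qFactorial Q 0 = 1 := prod_range_zero _

theorem succ (m : ℕ) : qFactorial Q (m + 1) = qFactorial Q m * (1 - Q ^ (m + 1)) :=
  prod_range_succ _ _

theorem mul_qFactorial_mul_gaussBinom : ∀ a c : ℕ,
    qFactorial Q a * qFactorial Q c * gaussBinom Q (a + c) a = qFactorial Q (a + c)
  | 0, c => by simp
  | a + 1, 0 => by simp
  | a + 1, c + 1 => by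
    have h₁ := mul_qFactorial_mul_gaussBinom a (c + 1)
    have h₂ := mul_qFactorial_mul_gaussBinom (a + 1) c
    rw [show a + (c + 1) = a + 1 + c by omega, succ Q c] at h₁
    rw [succ Q a] at h₂
    rw [show a + 1 + (c + 1) = a + 1 + c + 1 by omega, gaussBinom.succ_succ, succ Q a, succ Q c,
      succ Q (a + 1 + c)]
    linear_combination (1 - Q ^ (a + 1)) * h₁ + Q ^ (a + 1) * (1 - Q ^ (c + 1)) * h₂

theorem pow_add_one_dvd_sub {r s : ℕ} (h : r ≤ s) :
    Q ^ (r + 1) ∣ qFactorial Q s - qFactorial Q r := by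
  obtain ⟨t, rfl⟩ := Nat.exists_eq_add_of_le h
  rw [qFactorial, qFactorial, prod_range_add, ← mul_sub_one]
  exact dvd_mul_of_dvd_right (dvd_prod_sub_one fun i _ ↦ ⟨-Q ^ i, by ring⟩) _

theorem pow_min_add_one_dvd_mul_sub_mul {a c m : ℕ} (h : min a c ≤ m) :
    Q ^ (min a c + 1) ∣
      qFactorial Q m * qFactorial Q (a + c) - qFactorial Q a * qFactorial Q c := by
  have hmin : ∀ {x}, min a c ≤ x → Ideal.Quotient.mk (Ideal.span {Q ^ (min a c + 1)})
      (qFactorial Q x) = Ideal.Quotient.mk _ (qFactorial Q (min a c)) := fun hx ↦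
    Ideal.Quotient.eq.mpr (Ideal.mem_span_singleton.mpr (pow_add_one_dvd_sub Q hx))
  rw [← Ideal.mem_span_singleton, ← Ideal.Quotient.eq, map_mul, map_mul, hmin h,
    hmin (x := a + c) (by omega), hmin (min_le_left a c), hmin (min_le_right a c)]

theorem pow_min_add_one_dvd_mul_gaussBinom_sub_one {a c m : ℕ}
    (hu : IsUnit (qFactorial Q a * qFactorial Q c)) (h : min a c ≤ m) :
    Q ^ (min a c + 1) ∣ qFactorial Q m * gaussBinom Q (a + c) a - 1 := by
  rw [← hu.dvd_mul_left]
  convert pow_min_add_one_dvd_mul_sub_mul Q h using 1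
  rw [← mul_qFactorial_mul_gaussBinom Q a c]
  ring

end qFactorial

theorem PowerSeries.isUnit_qFactorial {φ : R⟦X⟧} (h : constantCoeff φ = 0) (m : ℕ) :
    IsUnit (qFactorial φ m) := by
  simp [isUnit_iff_constantCoeff, qFactorial, h]

open scoped PowerSeries.WithPiTopology in
theorem PowerSeries.tendsto_mk_coeff_of_X_pow_dvd_sub [TopologicalSpace R] {ι : Type*}
    {l : Filter ι} {F : ι → R⟦X⟧} (A : ℕ → R⟦X⟧)
    (h : ∀ m, ∀ᶠ i in l, X ^ (m + 1) ∣ F i - A m) :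
    Tendsto F l (𝓝 (mk fun d ↦ coeff d (A d))) := by
  rw [PowerSeries.WithPiTopology.tendsto_iff_coeff_tendsto]
  intro d
  rw [coeff_mk]
  refine tendsto_const_nhds.congr' ?_
  filter_upwards [h d] with i hi
  rw [eq_comm, ← sub_eq_zero, ← map_sub]
  exact X_pow_dvd_iff.mp hi d d.lt_succ_self

end CommRing

theorem Finset.sum_Icc_neg_eq_sum_range {M : Type*} [AddCommMonoid M] (f : ℤ → M) (m : ℕ) :
    ∑ k ∈ Icc (-(m : ℤ)) m, f k = ∑ j ∈ range (2 * m + 1), f (j - m) := by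
  refine sum_nbij' (fun k ↦ (k + m).toNat) (fun j ↦ j - m) ?_ ?_ ?_ ?_ ?_ <;> intros <;>
    simp_all <;> first | omega | congr 1; omega

def jacobiExponent (k : ℤ) : ℕ := (k * (5 * k + 1) / 2).toNat

theorem two_mul_jacobiExponent (k : ℤ) : 2 * (jacobiExponent k : ℤ) = k * (5 * k + 1) := by
  have hdvd : 2 ∣ k * (5 * k + 1) := by
    rw [show k * (5 * k + 1) = k * (k + 1) + 2 * (2 * k ^ 2) by ring]
    exact (Int.even_mul_succ_self k).two_dvd.add (dvd_mul_right _ _)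
  have hnonneg : 0 ≤ k * (5 * k + 1) := by
    rcases le_or_gt 0 k with hk | hk <;> nlinarith
  rw [jacobiExponent, Int.toNat_of_nonneg (by omega), Int.mul_ediv_cancel' hdvd]

theorem natAbs_le_jacobiExponent (k : ℤ) : k.natAbs ≤ jacobiExponent k := by
  have h := two_mul_jacobiExponent k
  obtain ⟨n, rfl | rfl⟩ := Int.eq_nat_or_neg k <;>
    simp only [Int.natAbs_neg, Int.natAbs_natCast] <;> zify at h ⊢ <;> nlinarith

theorem two_mul_choose_two (j : ℕ) : 2 * (j.choose 2 : ℤ) = j * (j - 1) := by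
  have : 2 * (j.choose 2 : ℚ) = j * (j - 1) := by rw [Nat.cast_choose_two]; ring
  exact_mod_cast this

theorem choose_two_add_jacobiExponent {m j : ℕ} (hj : j ≤ 2 * m) :
    5 * j.choose 2 + 3 * j + 5 * m * (2 * m - j) =
      5 * m.choose 2 + 3 * m + 5 * m * m + jacobiExponent (j - m) := by
  have hj2 := two_mul_choose_two j
  have hm2 := two_mul_choose_two m
  have he := two_mul_jacobiExponent (j - m)
  zify [hj]
  linarith

noncomputable def jacobiTerm (k : ℤ) : ℤ⟦X⟧ := (-1) ^ k.natAbs * X ^ jacobiExponent k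

noncomputable def jacobiFactor (n : ℕ) : ℤ⟦X⟧ :=
  (1 - X ^ (5 * n + 5)) * (1 - X ^ (5 * n + 3)) * (1 - X ^ (5 * n + 2))

theorem neg_one_pow_eq_mul_neg_one_pow_natAbs {R : Type*} [Monoid R] [HasDistribNeg R]
    (j m : ℕ) :
    (-1 : R) ^ j = (-1) ^ m * (-1) ^ ((j : ℤ) - m).natAbs := by
  rw [← pow_add]
  exact neg_one_pow_congr (by rw [Nat.even_iff, Nat.even_iff]; omega)

theorem prod_jacobiFactor (m : ℕ) : ∏ n ∈ range m, jacobiFactor n =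
    qFactorial (X ^ 5) m * ∏ n ∈ range m, ((1 - X ^ (5 * n + 3)) * (1 - X ^ (5 * n + 2))) := by
  rw [qFactorial, ← prod_mul_distrib]
  refine prod_congr rfl fun n _ ↦ ?_
  rw [jacobiFactor]
  ring

/-- A finite form of the triple product identity. -/
theorem prod_one_sub_X_pow_eq_sum_gaussBinom (m : ℕ) :
    ∏ n ∈ range m, ((1 - X ^ (5 * n + 3)) * (1 - X ^ (5 * n + 2)) : ℤ⟦X⟧) =
      ∑ j ∈ range (2 * m + 1),
        (-1) ^ ((j : ℤ) - m).natAbs * gaussBinom (X ^ 5) (2 * m) j *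
          X ^ jacobiExponent (j - m) := by
  set c : ℤ⟦X⟧ := (-1) ^ m * X ^ (5 * m.choose 2 + 3 * m + 5 * m * m)
  have hc : c ≠ 0 := mul_ne_zero (pow_ne_zero _ (by simp)) (pow_ne_zero _ X_ne_zero)
  have hlow : ∏ i ∈ range m, (X ^ (5 * m) - X ^ 3 * (X ^ 5) ^ i : ℤ⟦X⟧) =
      (∏ i ∈ range m, -X ^ (5 * i + 3)) * ∏ i ∈ range m, (1 - X ^ (5 * i + 2)) := by
    rw [← prod_range_reflect (fun i ↦ 1 - X ^ (5 * i + 2)), ← prod_mul_distrib]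
    refine prod_congr rfl fun i hi ↦ ?_
    obtain ⟨k, rfl⟩ := Nat.exists_eq_add_of_lt (mem_range.mp hi)
    rw [show i + k + 1 - 1 - i = k by omega]
    ring
  have hlhs : ∏ i ∈ range (2 * m), (X ^ (5 * m) - X ^ 3 * (X ^ 5) ^ i : ℤ⟦X⟧) =
      c * ∏ n ∈ range m, ((1 - X ^ (5 * n + 3)) * (1 - X ^ (5 * n + 2))) := by
    have hsum : ∑ i ∈ range m, (5 * i + 3) = 5 * m.choose 2 + 3 * m := by
      rw [sum_add_distrib, ← mul_sum, sum_range_id, ← Nat.choose_two_right, sum_const,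
        card_range, smul_eq_mul, mul_comm m]
    have hhigh : ∏ i ∈ range m, (X ^ (5 * m) - X ^ 3 * (X ^ 5) ^ (m + i) : ℤ⟦X⟧) =
        ∏ i ∈ range m, (X ^ (5 * m) * (1 - X ^ (5 * i + 3))) :=
      prod_congr rfl fun i _ ↦ by ring
    rw [two_mul, prod_range_add, hlow, hhigh, prod_mul_distrib, prod_mul_distrib]
    simp only [neg_eq_neg_one_mul (X ^ _), prod_mul_distrib, prod_const, card_range,
      prod_pow_eq_pow_sum, hsum, c]
    ring
  have hterm : ∀ j ∈ range (2 * m + 1), (-1) ^ j * gaussBinom (X ^ 5) (2 * m) j *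
      (X ^ 5) ^ j.choose 2 * (X ^ 3) ^ j * (X ^ (5 * m)) ^ (2 * m - j) =
      c * ((-1) ^ ((j : ℤ) - m).natAbs * gaussBinom (X ^ 5) (2 * m) j *
        X ^ jacobiExponent (j - m)) := by
    intro j hj
    have hexp := choose_two_add_jacobiExponent (mem_range_succ_iff.mp hj)
    have hX : (X : ℤ⟦X⟧) ^ (5 * j.choose 2) * X ^ (3 * j) * X ^ (5 * m * (2 * m - j)) =
        X ^ (5 * m.choose 2 + 3 * m + 5 * m * m) * X ^ jacobiExponent (j - m) := by
      rw [← pow_add, ← pow_add, ← pow_add, hexp]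
    rw [neg_one_pow_eq_mul_neg_one_pow_natAbs j m, ← pow_mul, ← pow_mul, ← pow_mul]
    linear_combination (-1) ^ m * (-1) ^ ((j : ℤ) - m).natAbs * gaussBinom (X ^ 5) (2 * m) j * hX
  apply mul_left_cancel₀ hc
  rw [← hlhs, mul_sum, ← sum_congr rfl hterm]
  exact prod_sub_mul_pow_eq_sum _ _ _ _

theorem X_pow_add_one_dvd_prod_jacobiFactor_sub_sum (m : ℕ) :
    X ^ (m + 1) ∣
      ∏ n ∈ range m, jacobiFactor n - ∑ k ∈ Icc (-(m : ℤ)) m, jacobiTerm k := by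
  rw [prod_jacobiFactor, prod_one_sub_X_pow_eq_sum_gaussBinom, sum_Icc_neg_eq_sum_range, mul_sum,
    ← sum_sub_distrib]
  refine dvd_sum fun j hj ↦ ?_
  obtain ⟨c, hc⟩ : ∃ c, 2 * m = j + c := ⟨2 * m - j, by grind⟩
  have hunit : IsUnit (qFactorial (X ^ 5 : ℤ⟦X⟧) j * qFactorial (X ^ 5) c) :=
    (isUnit_qFactorial (by simp) j).mul (isUnit_qFactorial (by simp) c)
  have hbinom := qFactorial.pow_min_add_one_dvd_mul_gaussBinom_sub_one (X ^ 5) hunit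
    (m := m) (by omega)
  rw [← pow_mul, ← hc] at hbinom
  have hexp := natAbs_le_jacobiExponent (j - m)
  calc X ^ (m + 1) ∣ (X : ℤ⟦X⟧) ^ (jacobiExponent (j - m) + 5 * (min j c + 1)) :=
        pow_dvd_pow X (by omega)
    _ ∣ X ^ jacobiExponent (j - m) *
          (qFactorial (X ^ 5) m * gaussBinom (X ^ 5) (2 * m) j - 1) := by
        rw [pow_add]
        exact mul_dvd_mul_left _ hbinom
    _ ∣ _ := by
        rw [jacobiTerm]
        exact ⟨(-1) ^ ((j : ℤ) - m).natAbs, by ring⟩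

theorem X_pow_dvd_jacobiFactor_sub_one (n : ℕ) : X ^ (5 * n + 2) ∣ jacobiFactor n - 1 :=
  ⟨X ^ (10 * n + 4) * (-X ^ 4) + X ^ (5 * n + 2) * (X ^ 4 + X ^ 3 + X) - (X ^ 3 + X + 1), by
    rw [jacobiFactor]; ring⟩

theorem X_pow_natAbs_dvd_jacobiTerm (k : ℤ) : X ^ k.natAbs ∣ jacobiTerm k :=
  dvd_mul_of_dvd_right (pow_dvd_pow X (natAbs_le_jacobiExponent k)) _

noncomputable def jacobiSeries : ℤ⟦X⟧ :=
  mk fun d ↦ coeff d (∑ k ∈ Icc (-(d : ℤ)) d, jacobiTerm k)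

theorem hasSum_jacobiTerm : HasSum jacobiTerm jacobiSeries := by
  refine tendsto_mk_coeff_of_X_pow_dvd_sub _ fun m ↦ ?_
  filter_upwards [eventually_ge_atTop (Icc (-(m : ℤ)) m)] with s hs
  rw [← sum_sdiff hs, add_sub_cancel_right]
  refine dvd_sum fun k hk ↦ dvd_trans (pow_dvd_pow X ?_) (X_pow_natAbs_dvd_jacobiTerm k)
  rw [Finset.mem_sdiff, Finset.mem_Icc] at hk
  omega

theorem hasProd_jacobiFactor : HasProd jacobiFactor jacobiSeries := by
  refine tendsto_mk_coeff_of_X_pow_dvd_sub _ fun m ↦ ?_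
  filter_upwards [eventually_ge_atTop (range m)] with s hs
  rw [← sub_add_sub_cancel _ (∏ n ∈ range m, jacobiFactor n)]
  refine dvd_add (dvd_prod_sub_prod_of_subset hs fun n hn ↦ ?_)
    (X_pow_add_one_dvd_prod_jacobiFactor_sub_sum m)
  refine dvd_trans (pow_dvd_pow X ?_) (X_pow_dvd_jacobiFactor_sub_one n)
  rw [Finset.mem_sdiff, Finset.mem_range] at hn
  omega

/-- The specialization `u = q³`, `v = q²` of the Jacobi triple product identity. -/
theorem jacobi_specialization_two :
    (∏' n : ℕ, ((1 - (X : ℤ⟦X⟧) ^ (5 * n + 5)) * (1 - X ^ (5 * n + 3)) * (1 - X ^ (5 * n + 2))))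
      = ∑' k : ℤ, ((-1 : ℤ⟦X⟧) ^ k.natAbs * X ^ (k * (5 * k + 1) / 2).toNat) :=
  hasProd_jacobiFactor.tprod_eq.trans hasSum_jacobiTerm.tsum_eq.symm
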